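/- arXiv:2411.02368 — 2 statements merged into one kernel-verified Lean document; each statement's English description precedes it below -/
import Mathlib

section
/- Let |v⟩, |ψ⟩ be vectors in a complex Hilbert space with ‖ψ‖ = 1. Then the trace norm of the rank-≤2 Hermitian operator |v⟩⟨ψ| + |ψ⟩⟨v| equals 2·sqrt(⟨v|v⟩ − (Im⟨ψ|v⟩)²). -/
open Matrix
open scoped ComplexOrder

/-- The positive semidefinite square root of a positive semidefinite matrix
(removed from Mathlib; re-declared here with its former definition). -/
noncomputable def Matrix.PosSemidef.sqrt {n 𝕜 : Type*} [Fintype n] [DecidableEq n] [RCLike 𝕜]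
    {A : Matrix n n 𝕜} (hA : A.PosSemidef) : Matrix n n 𝕜 :=
  hA.1.eigenvectorUnitary.1 * diagonal ((↑) ∘ (√·) ∘ hA.1.eigenvalues) *
    (star hA.1.eigenvectorUnitary : Matrix n n 𝕜)

variable {n : ℕ}

lemma vmv_mul (x y z u : Fin n → ℂ) :
    vecMulVec x y * vecMulVec z u = (y ⬝ᵥ z) • vecMulVec x u := by
  ext i j
  simp only [Matrix.mul_apply, vecMulVec_apply, Matrix.smul_apply, smul_eq_mul, dotProduct,
    Finset.sum_mul]
  exact Finset.sum_congr rfl fun k _ => by ring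

lemma vmv_trace (x y : Fin n → ℂ) : (vecMulVec x y).trace = y ⬝ᵥ x := by
  simp [Matrix.trace, Matrix.diag, vecMulVec_apply, dotProduct, mul_comm]

lemma vmv_conjT (x y : Fin n → ℂ) : (vecMulVec x y)ᴴ = vecMulVec (star y) (star x) := by
  ext i j
  simp [vecMulVec_apply, conjTranspose_apply, mul_comm]

lemma dot_conj (x y : Fin n → ℂ) : star y ⬝ᵥ x = starRingEnd ℂ (star x ⬝ᵥ y) := by
  simp [dotProduct, map_sum, mul_comm, Pi.star_apply]

lemma vmv_mulVec (x y w : Fin n → ℂ) : vecMulVec x y *ᵥ w = (y ⬝ᵥ w) • x := by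
  ext i
  simp only [mulVec, vecMulVec_apply, dotProduct, Pi.smul_apply, smul_eq_mul, Finset.sum_mul,
    Finset.mul_sum]
  exact Finset.sum_congr rfl fun k _ => by ring

open scoped MatrixOrder in
lemma psd_sqrt_eq_cfc {A : Matrix (Fin n) (Fin n) ℂ} (hA : A.PosSemidef) :
    hA.sqrt = CFC.sqrt A := by
  rw [CFC.sqrt_eq_cfc, cfc_nnreal_eq_real _ A, hA.1.cfc_eq]
  simp only [Matrix.PosSemidef.sqrt, IsHermitian.cfc, Unitary.conjStarAlgAut_apply]
  have hf : (fun x : ℝ => √x) = fun x => ((NNReal.sqrt x.toNNReal : NNReal) : ℝ) := by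
    funext x
    rw [Real.coe_sqrt, Real.coe_toNNReal']
    rcases le_total x 0 with h | h
    · rw [max_eq_right h, Real.sqrt_zero, Real.sqrt_eq_zero'.mpr h]
    · rw [max_eq_left h]
  rw [hf]

open scoped MatrixOrder in
lemma Matrix.PosSemidef.eq_sqrt_of_sq_eq {A : Matrix (Fin n) (Fin n) ℂ} (hA : A.PosSemidef)
    {B : Matrix (Fin n) (Fin n) ℂ} (hB : B.PosSemidef) (hAB : A ^ 2 = B) : A = hB.sqrt := by
  rw [psd_sqrt_eq_cfc, eq_comm, CFC.sqrt_eq_iff B A hB.nonneg hA.nonneg, ← hAB, sq]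

/-- The trace norm `‖M‖₁ = Tr √(M†M)` of a complex square matrix. -/
noncomputable def traceNorm {n : ℕ} (M : Matrix (Fin n) (Fin n) ℂ) : ℝ :=
  ((Matrix.posSemidef_conjTranspose_mul_self M).sqrt.trace).re

theorem traceNorm_outer_add_outer {n : ℕ} (v ψ : Fin n → ℂ)
    (hψ : star ψ ⬝ᵥ ψ = 1) :
    traceNorm (Matrix.vecMulVec v (star ψ) + Matrix.vecMulVec ψ (star v)) =
      2 * Real.sqrt ((star v ⬝ᵥ v).re - ((star ψ ⬝ᵥ v).im) ^ 2) := by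
  set a : ℂ := star ψ ⬝ᵥ v with ha
  set b : ℂ := star v ⬝ᵥ v with hb
  set β : ℝ := b.re with hβ
  set μ : ℝ := a.im with hμ
  have hva : star v ⬝ᵥ ψ = starRingEnd ℂ a := dot_conj ψ v
  have hb0 : (0:ℂ) ≤ b := dotProduct_star_self_nonneg v
  have hbβ : b = (β:ℂ) := by
    rw [Complex.le_def] at hb0
    exact Complex.ext rfl (by simpa using hb0.2.symm)
  -- Cauchy–Schwarz-type bound
  have hw : star (v - a • ψ) ⬝ᵥ (v - a • ψ) = b - starRingEnd ℂ a * a := by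
    simp only [star_sub, star_smul, sub_dotProduct, dotProduct_sub, smul_dotProduct,
      dotProduct_smul, hψ, hva, ← ha, ← hb, smul_eq_mul, star_trivial, RCLike.star_def]
    ring
  have h0 : (0:ℂ) ≤ star (v - a • ψ) ⬝ᵥ (v - a • ψ) := dotProduct_star_self_nonneg _
  have hcs : a.re ^ 2 + μ ^ 2 ≤ β := by
    rw [hw, Complex.le_def] at h0
    have := h0.1
    simp [Complex.sub_re, Complex.mul_re, hβ] at this
    nlinarith [this]
  have hnn : 0 ≤ β - μ ^ 2 := by nlinarith [sq_nonneg a.re]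
  rcases hnn.eq_or_lt with hdeg | hs
  · -- degenerate case : v = a • ψ and M = 0
    have hre : a.re = 0 := by nlinarith [sq_nonneg a.re]
    have hw0 : star (v - a • ψ) ⬝ᵥ (v - a • ψ) = 0 := by
      rw [hw, hbβ]
      apply Complex.ext <;>
        simp [Complex.mul_re, Complex.mul_im, hre, ← hμ] <;> nlinarith [hdeg]
    have hv : v = a • ψ := by
      have := dotProduct_star_self_eq_zero.mp hw0
      exact sub_eq_zero.mp this
    have hM0 : Matrix.vecMulVec v (star ψ) + Matrix.vecMulVec ψ (star v) = 0 := by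
      ext i j
      simp only [Matrix.add_apply, vecMulVec_apply, hv, Pi.smul_apply, Pi.star_apply,
        smul_eq_mul, star_mul', Matrix.zero_apply]
      have : a + starRingEnd ℂ a = 0 := by
        apply Complex.ext <;> simp [hre]
      calc a * ψ i * star (ψ j) + ψ i * (starRingEnd ℂ a * star (ψ j))
          = (a + starRingEnd ℂ a) * (ψ i * star (ψ j)) := by ring
        _ = 0 := by rw [this]; ring
    rw [hM0]
    have hz : (Matrix.posSemidef_conjTranspose_mul_self
        (0 : Matrix (Fin n) (Fin n) ℂ)).sqrt = 0 :=
      ((Matrix.PosSemidef.zero).eq_sqrt_of_sq_eq _ (by simp)).symm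
    rw [traceNorm, hz, ← hdeg]
    simp
  · -- main case
    set s : ℝ := Real.sqrt (β - μ ^ 2) with hsdef
    have hs2 : s ^ 2 = β - μ ^ 2 := Real.sq_sqrt hnn
    have hspos : 0 < s := Real.sqrt_pos.mpr hs
    have hsne : ((s:ℂ)) ≠ 0 := by exact_mod_cast hspos.ne'
    set m : ℂ := Complex.I * (μ:ℂ) with hm
    set P := Matrix.vecMulVec ψ (star ψ) with hP
    set Q := Matrix.vecMulVec v (star ψ) with hQ
    set R := Matrix.vecMulVec ψ (star v) with hR
    set W := Matrix.vecMulVec v (star v) with hW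
    set S : Matrix (Fin n) (Fin n) ℂ :=
      ((s:ℂ))⁻¹ • (W + m • Q - m • R + (β:ℂ) • P) with hS
    set M := Q + R with hMdef
    have hMherm : Mᴴ = M := by
      rw [hMdef, conjTranspose_add, hQ, hR, vmv_conjT, vmv_conjT]
      simp [add_comm]
    have hs2c : ((s:ℂ)) ^ 2 = (β:ℂ) - (μ:ℂ) ^ 2 := by exact_mod_cast congrArg Complex.ofReal hs2
    have hm2 : m * m = -((μ:ℂ) ^ 2) := by
      rw [hm]; rw [mul_mul_mul_comm, Complex.I_mul_I]; ring
    have hac : a - starRingEnd ℂ a = 2 * m := by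
      rw [Complex.sub_conj, hm, ← hμ]; push_cast; ring
    set T : Matrix (Fin n) (Fin n) ℂ := W + m • Q - m • R + (β:ℂ) • P with hT
    have hT2 : T ^ 2 = ((β:ℂ) - (μ:ℂ) ^ 2) • (M * M) := by
      rw [hT, hMdef]
      simp only [pow_two, smul_mul_assoc, Matrix.mul_smul, add_mul, mul_add, sub_mul, mul_sub,
        smul_smul, hP, hQ, hR, hW, vmv_mul, hψ, hva, ← ha, ← hb, hbβ, one_smul, smul_add,
        smul_sub]
      match_scalars
      · linear_combination m * hac + hm2
      · linear_combination (β:ℂ) * hac + a * hm2 +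
          (μ:ℂ) ^ 2 * ((starRingEnd ℂ) a - a) * Complex.I_sq
      · linear_combination (-(β:ℂ)) * hac + (starRingEnd ℂ a) * hm2 +
          (μ:ℂ) ^ 2 * (a - (starRingEnd ℂ) a) * Complex.I_sq
      · linear_combination (β:ℂ) * m * hac + (β:ℂ) * hm2
    have hSsq : S ^ 2 = Mᴴ * M := by
      rw [hMherm, hS, smul_pow, hT2, smul_smul, ← hs2c]
      rw [inv_pow]
      rw [inv_mul_cancel₀ (pow_ne_zero 2 hsne), one_smul]
    have hmstar : star m = -m := by
      rw [hm]; simp [Complex.conj_I]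
    have hSherm : S.IsHermitian := by
      show Sᴴ = S
      rw [hS, conjTranspose_smul, conjTranspose_add, conjTranspose_sub, conjTranspose_add,
        conjTranspose_smul, conjTranspose_smul, conjTranspose_smul,
        hP, hQ, hR, hW, vmv_conjT, vmv_conjT, vmv_conjT, vmv_conjT]
      simp only [star_star, ← hP, ← hQ, ← hR, ← hW, hmstar, Complex.star_def,
        Complex.conj_ofReal, map_inv₀]
      module
    have hSpsd : S.PosSemidef := by
      refine .of_dotProduct_mulVec_nonneg hSherm fun x => ?_
      have hxv : star x ⬝ᵥ v = starRingEnd ℂ (star v ⬝ᵥ x) := dot_conj v x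
      have hxψ : star x ⬝ᵥ ψ = starRingEnd ℂ (star ψ ⬝ᵥ x) := dot_conj ψ x
      set p : ℂ := star v ⬝ᵥ x with hp
      set q : ℂ := star ψ ⬝ᵥ x with hq
      rw [hS, hT, hP, hQ, hR, hW]
      simp only [smul_mulVec, add_mulVec, sub_mulVec, vmv_mulVec, ← hp, ← hq,
        dotProduct_smul, smul_eq_mul, dotProduct_add, dotProduct_sub, hxv, hxψ, hm]
      rw [Complex.le_def]
      constructor
      · simp only [Complex.zero_re, Complex.mul_re, Complex.mul_im, Complex.add_re,
          Complex.add_im, Complex.sub_re, Complex.sub_im, Complex.I_re, Complex.I_im,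
          Complex.ofReal_re, Complex.ofReal_im, Complex.conj_re, Complex.conj_im,
          Complex.inv_re, Complex.inv_im, Complex.normSq_ofReal]
        have hss : s * s⁻¹ ^ 2 = s⁻¹ := by
          field_simp [pow_two]
        have hK : (0:ℝ) ≤ (p.re - μ * q.im) ^ 2 + (p.im + μ * q.re) ^ 2 +
            (β - μ ^ 2) * (q.re ^ 2 + q.im ^ 2) :=
          add_nonneg (add_nonneg (sq_nonneg _) (sq_nonneg _))
            (mul_nonneg hnn (by positivity))
        ring_nf
        simp only [hss]
        nlinarith [mul_nonneg (inv_nonneg.mpr hspos.le) hK]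
      · simp only [Complex.zero_im, Complex.mul_re, Complex.mul_im, Complex.add_re,
          Complex.add_im, Complex.sub_re, Complex.sub_im, Complex.I_re, Complex.I_im,
          Complex.ofReal_re, Complex.ofReal_im, Complex.conj_re, Complex.conj_im,
          Complex.inv_re, Complex.inv_im, Complex.normSq_ofReal]
        ring
    have hsqrt : (Matrix.posSemidef_conjTranspose_mul_self M).sqrt = S :=
      (hSpsd.eq_sqrt_of_sq_eq (Matrix.posSemidef_conjTranspose_mul_self M) hSsq).symm
    have htr : S.trace = ((2 * s : ℝ) : ℂ) := by
      rw [hS, hT, trace_smul, trace_add, trace_sub, trace_add, trace_smul, trace_smul,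
        trace_smul, hP, hQ, hR, hW, vmv_trace, vmv_trace, vmv_trace, vmv_trace,
        hψ, hva, ← ha, ← hb, hbβ]
      simp only [smul_eq_mul, mul_one]
      field_simp
      push_cast
      linear_combination m * hac + 2 * hm2 - 2 * hs2c
    rw [traceNorm, hsqrt, htr]
    simp [Complex.ofReal_re]
end

section
/- Let (|ψ_i⟩)_{i=1}^k be vectors in a complex Hilbert space and let A be a k×k complex matrix. Define G to be the Gram matrix G_{ij} = ⟨ψ_i|ψ_j⟩. Then the nonzero singular values of the operator ∑_{i,j} A_{ij}|ψ_i⟩⟨ψ_j| coincide with the nonzero singular values of the k×k matrix √G·A·√G; in particular their trace norms agree: ‖∑_{ij} A_{ij}|ψ_i⟩⟨ψ_j|‖₁ = ‖√G A √G‖₁. -/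
open Matrix Polynomial
open scoped ComplexOrder

private lemma sqrt_eq_cfc' {m : ℕ} {M : Matrix (Fin m) (Fin m) ℂ} (hM : M.PosSemidef) :
    hM.sqrt = cfc Real.sqrt M := by
  rw [Matrix.IsHermitian.cfc_eq hM.1]
  rfl

private lemma sqrt_herm' {m : ℕ} {M : Matrix (Fin m) (Fin m) ℂ} (hM : M.PosSemidef) :
    (hM.sqrt)ᴴ = hM.sqrt := by
  rw [sqrt_eq_cfc']
  exact (cfc_predicate Real.sqrt M : IsSelfAdjoint _)

private lemma sqrt_mul_self' {m : ℕ} {M : Matrix (Fin m) (Fin m) ℂ} (hM : M.PosSemidef) :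
    hM.sqrt * hM.sqrt = M := by
  have hsa : IsSelfAdjoint M := hM.1.isSelfAdjoint
  rw [sqrt_eq_cfc', ← cfc_mul Real.sqrt Real.sqrt M]
  conv_rhs => rw [← cfc_id' ℝ M]
  apply cfc_congr
  intro x hx
  rw [hM.1.spectrum_real_eq_range_eigenvalues] at hx
  obtain ⟨i, rfl⟩ := hx
  exact Real.mul_self_sqrt (hM.eigenvalues_nonneg i)

private lemma sqrt_eq_aeval' {m : ℕ} {M : Matrix (Fin m) (Fin m) ℂ} (hM : M.PosSemidef)
    (p : ℝ[X]) (hp : ∀ i, p.eval (hM.1.eigenvalues i) = Real.sqrt (hM.1.eigenvalues i)) :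
    hM.sqrt = aeval M p := by
  have h0 : hM.sqrt = cfc Real.sqrt M := by
    rw [Matrix.IsHermitian.cfc_eq hM.1]
    rfl
  rw [h0, ← cfc_polynomial (R := ℝ) p M hM.1.isSelfAdjoint]
  apply cfc_congr
  intro x hx
  rw [hM.1.spectrum_real_eq_range_eigenvalues] at hx
  obtain ⟨i, rfl⟩ := hx
  exact (hp i).symm

private lemma trace_pow_comm' {a b : ℕ} (Y : Matrix (Fin a) (Fin b) ℂ) (j : ℕ) :
    ((Y * Yᴴ) ^ (j + 1)).trace = ((Yᴴ * Y) ^ (j + 1)).trace := by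
  have h : ∀ j : ℕ, (Y * Yᴴ) ^ (j + 1) = Y * ((Yᴴ * Y) ^ j * Yᴴ) := by
    intro j
    induction j with
    | zero => simp [Matrix.mul_assoc]
    | succ j ih =>
      rw [pow_succ, ih, pow_succ]
      simp only [Matrix.mul_assoc]
  rw [h, Matrix.trace_mul_comm, Matrix.mul_assoc, ← pow_succ]

private lemma trace_aeval_comm' {a b : ℕ} (Y : Matrix (Fin a) (Fin b) ℂ) (p : ℝ[X])
    (h0 : p.coeff 0 = 0) :
    (aeval (Y * Yᴴ) p).trace = (aeval (Yᴴ * Y) p).trace := by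
  rw [aeval_eq_sum_range, aeval_eq_sum_range, Matrix.trace_sum, Matrix.trace_sum]
  apply Finset.sum_congr rfl
  intro i _
  rw [Matrix.trace_smul, Matrix.trace_smul]
  cases i with
  | zero => rw [h0]; simp
  | succ j => rw [trace_pow_comm' Y j]

private lemma sqrt_trace_congr {m : ℕ} {P Q : Matrix (Fin m) (Fin m) ℂ}
    (hP : P.PosSemidef) (hQ : Q.PosSemidef) (h : P = Q) :
    hP.sqrt.trace = hQ.sqrt.trace := by subst h; rfl

private lemma key_trace_sqrt {a b : ℕ} (Y : Matrix (Fin a) (Fin b) ℂ) :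
    (Matrix.posSemidef_self_mul_conjTranspose Y).sqrt.trace =
      (Matrix.posSemidef_conjTranspose_mul_self Y).sqrt.trace := by
  classical
  set h1 := Matrix.posSemidef_self_mul_conjTranspose Y with hh1
  set h2 := Matrix.posSemidef_conjTranspose_mul_self Y with hh2
  set s : Finset ℝ :=
    insert 0 (Finset.image h1.1.eigenvalues Finset.univ ∪
      Finset.image h2.1.eigenvalues Finset.univ) with hs
  set p : ℝ[X] := Lagrange.interpolate s id Real.sqrt with hp
  have hnode : ∀ x ∈ s, p.eval x = Real.sqrt x := fun x hx => by
    exact Lagrange.eval_interpolate_at_node Real.sqrt Function.injective_id.injOn hx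
  have hc0 : p.coeff 0 = 0 := by
    rw [Polynomial.coeff_zero_eq_eval_zero, hnode 0 (Finset.mem_insert_self _ _), Real.sqrt_zero]
  rw [sqrt_eq_aeval' h1 p fun i => hnode _ <| Finset.mem_insert_of_mem <|
      Finset.mem_union_left _ <| Finset.mem_image_of_mem _ (Finset.mem_univ i),
    sqrt_eq_aeval' h2 p fun i => hnode _ <| Finset.mem_insert_of_mem <|
      Finset.mem_union_right _ <| Finset.mem_image_of_mem _ (Finset.mem_univ i)]
  exact trace_aeval_comm' Y p hc0

theorem traceNorm_gram_conjugation {n k : ℕ} (ψ : Fin k → (Fin n → ℂ))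
    (A G : Matrix (Fin k) (Fin k) ℂ)
    (hGdef : ∀ i j, G i j = star (ψ i) ⬝ᵥ ψ j) (hG : G.PosSemidef) :
    traceNorm (∑ i, ∑ j, A i j • Matrix.vecMulVec (ψ i) (star (ψ j))) =
      traceNorm (hG.sqrt * A * hG.sqrt) := by
  classical
  set P : Matrix (Fin n) (Fin k) ℂ := Matrix.of fun a i => ψ i a with hPd
  have hsum : (∑ i, ∑ j, A i j • Matrix.vecMulVec (ψ i) (star (ψ j))) = P * A * Pᴴ := by
    ext a b
    simp only [Finset.sum_apply, Matrix.sum_apply, Matrix.smul_apply, Matrix.vecMulVec_apply,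
      Matrix.mul_apply, Matrix.conjTranspose_apply, hPd, Matrix.of_apply, smul_eq_mul,
      Finset.sum_mul, Finset.mul_sum]
    rw [Finset.sum_comm]
    apply Finset.sum_congr rfl; intro j _
    apply Finset.sum_congr rfl; intro i _
    simp only [Pi.star_apply]
    ring
  have hGPP : G = Pᴴ * P := by
    ext i j
    rw [hGdef]
    simp [Matrix.mul_apply, Matrix.conjTranspose_apply, dotProduct, hPd]
  set S := hG.sqrt with hSdef
  have hsH : Sᴴ = S := sqrt_herm' hG
  have hSS : S * S = G := sqrt_mul_self' hG
  set Y := S * A * Pᴴ with hYd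
  set N := S * A * S with hNd
  have hinner : ∀ {m : ℕ} (Z : Matrix (Fin k) (Fin m) ℂ), Pᴴ * (P * Z) = S * (S * Z) := by
    intro m Z
    rw [← Matrix.mul_assoc, ← Matrix.mul_assoc, hSS, hGPP]
  have step1 : (P * A * Pᴴ)ᴴ * (P * A * Pᴴ) = Yᴴ * Y := by
    simp only [hYd, conjTranspose_mul, conjTranspose_conjTranspose, hsH, Matrix.mul_assoc]
    rw [hinner]
  have step2 : Y * Yᴴ = N * Nᴴ := by
    simp only [hYd, hNd, conjTranspose_mul, conjTranspose_conjTranspose, hsH, Matrix.mul_assoc]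
    rw [hinner]
  have c1 := sqrt_trace_congr (Matrix.posSemidef_conjTranspose_mul_self (P * A * Pᴴ))
    (Matrix.posSemidef_conjTranspose_mul_self Y) step1
  have c2 := (key_trace_sqrt Y).symm
  have c3 := sqrt_trace_congr (Matrix.posSemidef_self_mul_conjTranspose Y)
    (Matrix.posSemidef_self_mul_conjTranspose N) step2
  have c4 := key_trace_sqrt N
  rw [hsum]
  unfold traceNorm
  rw [c1, c2, c3, c4]
end
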